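/- arXiv:2512.17244 — 4 statements merged into one kernel-verified Lean document; each statement's English description precedes it below -/
import Mathlib

section
/- Let Γ = (V,A) be a finite connected digraph, let G ≤ Aut(Γ) be vertex-transitive, and suppose Γ is (G,s)-arc-transitive with s ≥ 2. Let N be a normal subgroup of G having at least 3 orbits on V. Then the quotient Γ_N is a digraph (i.e. its arc set A_N has no loops and (U,U') ∈ A_N implies (U',U) ∉ A_N), Γ_N is connected, N lies in the kernel of the induced action of G on V_N, and the induced action of G/N on Γ_N is vertex-transitive and transitive on the s-arcs of Γ_N. -/
/-!
Since `N ≤ G` acts by automorphisms, an arc of `Γ_N` lifts to an arc of `Γ` leaving (or entering)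
any prescribed vertex of the right orbit; hence `s`-arcs of `Γ_N` lift to `s`-arcs of `Γ`, and since
`G` permutes the `N`-orbits, `s`-arc-transitivity descends to `Γ_N`.

If `U → U' → U` in `Γ_N`, lift it to a 2-arc `w → u → u'` of `Γ` with `w` and `u'` in one `N`-orbit.
By 2-arc-transitivity (inherited from `s`-arc-transitivity, as every vertex has an out-arc) and
normality of `N` the ends of every 2-arc of `Γ` then lie in one `N`-orbit,
so every 2-arc `X → Y → Z` of `Γ_N` has `X = Z`. Walking from `U` along the connected graph `Γ_N`
never leaves `{U, U'}`, contradicting the existence of a third orbit.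
-/

namespace ArcTransDigraph

variable {V : Type*}

/-- The arc set of a digraph is asymmetric (in particular loopless). -/
def IsDigraph (A : V → V → Prop) : Prop := ∀ u v : V, A u v → ¬ A v u

/-- Connectivity of the underlying undirected graph. -/
def Connected (A : V → V → Prop) : Prop :=
  ∀ u v : V, Relation.ReflTransGen (fun a b => A a b ∨ A b a) u v

/-- `G` consists of automorphisms of the digraph `(V, A)`. -/
def PreservesArcs (A : V → V → Prop) (G : Subgroup (Equiv.Perm V)) : Prop :=
  ∀ g ∈ G, ∀ u v : V, A u v → A (g u) (g v)

/-- `G` is transitive on vertices. -/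
def VertexTransitive (G : Subgroup (Equiv.Perm V)) : Prop :=
  ∀ u v : V, ∃ g ∈ G, g u = v

/-- `p` is an `s`-arc of the digraph with arc set `A`. -/
def IsArcSeq (A : V → V → Prop) (s : ℕ) (p : Fin (s + 1) → V) : Prop :=
  ∀ i : Fin s, A (p i.castSucc) (p i.succ)

/-- `G` is transitive on the `s`-arcs of the digraph with arc set `A`. -/
def ArcTransitive (A : V → V → Prop) (G : Subgroup (Equiv.Perm V)) (s : ℕ) : Prop :=
  ∀ p q : Fin (s + 1) → V, IsArcSeq A s p → IsArcSeq A s q →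
    ∃ g ∈ G, ∀ i : Fin (s + 1), g (p i) = q i

/-- `N` is a subgroup of `G` which is normal in `G`. -/
def NormalIn (N G : Subgroup (Equiv.Perm V)) : Prop :=
  N ≤ G ∧ ∀ g ∈ G, ∀ x ∈ N, g * x * g⁻¹ ∈ N

/-- The `N`-orbit of a vertex, as a point of the orbit space `V_N`. -/
def orbMk (N : Subgroup (Equiv.Perm V)) (v : V) : Quotient (MulAction.orbitRel N V) :=
  Quotient.mk _ v

/-- The arc set of the quotient digraph `Γ_N`. -/
def quotArc (A : V → V → Prop) (N : Subgroup (Equiv.Perm V)) :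
    Quotient (MulAction.orbitRel N V) → Quotient (MulAction.orbitRel N V) → Prop :=
  fun U U' => ∃ u u' : V, orbMk N u = U ∧ orbMk N u' = U' ∧ A u u'

lemma natCard_le_two_of_forall_eq_or_eq {α : Type*} {a b : α} (h : ∀ x, x = a ∨ x = b) :
    Nat.card α ≤ 2 := by
  have hsurj : Function.Surjective fun i : Bool => if i then a else b := fun x =>
    (h x).elim (fun hx => ⟨true, by simp [hx]⟩) (fun hx => ⟨false, by simp [hx]⟩)
  simpa using Nat.card_le_card_of_surjective _ hsurj

lemma Connected.eq_or_eq_of_closed {Q : Type*} {B : Q → Q → Prop} (hconn : Connected B)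
    {U U' : Q} (h : B U U') (h' : B U' U) (hclosed : ∀ {X Y Z}, B X Y → B Y Z → X = Z)
    (W : Q) : W = U ∨ W = U' := by
  induction hconn U W with
  | refl => exact Or.inl rfl
  | tail _ hXY ih =>
    rcases ih with rfl | rfl <;> rcases hXY with hXY | hYX
    · exact Or.inr (hclosed h' hXY).symm
    · exact Or.inr (hclosed hYX h)
    · exact Or.inl (hclosed h hXY).symm
    · exact Or.inl (hclosed hYX h')

section OrbitQuotient

variable {A : V → V → Prop} {G N : Subgroup (Equiv.Perm V)}

lemma orbMk_eq_iff {u v : V} : orbMk N u = orbMk N v ↔ ∃ x ∈ N, x v = u := by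
  constructor
  · intro h
    obtain ⟨x, hx⟩ := Quotient.exact h
    exact ⟨x, x.2, hx⟩
  · rintro ⟨x, hx, rfl⟩
    exact Quotient.sound (MulAction.mem_orbit v (⟨x, hx⟩ : N))

lemma orbMk_apply_of_mem {x : Equiv.Perm V} (hx : x ∈ N) (v : V) : orbMk N (x v) = orbMk N v :=
  orbMk_eq_iff.mpr ⟨x, hx, rfl⟩

lemma NormalIn.orbMk_apply_eq_apply (hN : NormalIn N G) {g : Equiv.Perm V} (hg : g ∈ G)
    {u v : V} (h : orbMk N u = orbMk N v) : orbMk N (g u) = orbMk N (g v) := by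
  obtain ⟨x, hx, rfl⟩ := orbMk_eq_iff.mp h
  have hconj : (g * x * g⁻¹) (g v) = g (x v) := by simp [Equiv.Perm.mul_apply]
  rw [← hconj]
  exact orbMk_apply_of_mem (hN.2 g hg x hx) (g v)

lemma PreservesArcs.mono (h : PreservesArcs A G) (hNG : N ≤ G) : PreservesArcs A N :=
  fun x hx => h x (hNG hx)

lemma PreservesArcs.exists_arc_of_quotArc_left (hAut : PreservesArcs A N) {u : V}
    {W : Quotient (MulAction.orbitRel N V)} (h : quotArc A N (orbMk N u) W) :
    ∃ u', A u u' ∧ orbMk N u' = W := by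
  obtain ⟨a, b, ha, rfl, hab⟩ := h
  obtain ⟨x, hx, rfl⟩ := orbMk_eq_iff.mp ha.symm
  exact ⟨x b, hAut x hx a b hab, orbMk_apply_of_mem hx b⟩

lemma PreservesArcs.exists_arc_of_quotArc_right (hAut : PreservesArcs A N) {u : V}
    {W : Quotient (MulAction.orbitRel N V)} (h : quotArc A N W (orbMk N u)) :
    ∃ w, A w u ∧ orbMk N w = W := by
  obtain ⟨a, b, rfl, hb, hab⟩ := h
  obtain ⟨x, hx, rfl⟩ := orbMk_eq_iff.mp hb.symm
  exact ⟨x a, hAut x hx a b hab, orbMk_apply_of_mem hx a⟩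

lemma IsArcSeq.snoc {t : ℕ} {p : Fin (t + 1) → V} (hp : IsArcSeq A t p) {w : V}
    (hw : A (p (Fin.last t)) w) : IsArcSeq A (t + 1) (Fin.snoc p w) := by
  intro i
  induction i using Fin.lastCases with
  | last => simpa using hw
  | cast j =>
    rw [Fin.succ_castSucc, Fin.snoc_castSucc, Fin.snoc_castSucc]
    exact hp j

lemma IsArcSeq.init {t : ℕ} {p : Fin (t + 2) → V} (hp : IsArcSeq A (t + 1) p) :
    IsArcSeq A t (fun i => p i.castSucc) :=
  fun i => hp i.castSucc

lemma IsArcSeq.exists_lift (hAut : PreservesArcs A N) {t : ℕ}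
    {p : Fin (t + 1) → Quotient (MulAction.orbitRel N V)} (hp : IsArcSeq (quotArc A N) t p) :
    ∃ q : Fin (t + 1) → V, IsArcSeq A t q ∧ (fun i => orbMk N (q i)) = p := by
  induction t with
  | zero =>
    obtain ⟨v, hv⟩ := Quotient.exists_rep (p 0)
    exact ⟨fun _ => v, Fin.elim0, funext fun i => by rw [Fin.fin_one_eq_zero i]; exact hv⟩
  | succ t ih =>
    obtain ⟨q, hq, hqp⟩ := ih hp.init
    have hlast := hp (Fin.last t)
    rw [← congrFun hqp (Fin.last t)] at hlast
    obtain ⟨w, hw, hwp⟩ := hAut.exists_arc_of_quotArc_left hlast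
    refine ⟨Fin.snoc q w, hq.snoc hw, funext fun i => ?_⟩
    induction i using Fin.lastCases with
    | last => simpa using hwp
    | cast j => simpa using congrFun hqp j

lemma exists_arc_of_vertexTransitive (hAut : PreservesArcs A G) (hvt : VertexTransitive G)
    {a b : V} (hab : A a b) (v : V) : ∃ w, A v w := by
  obtain ⟨g, hg, rfl⟩ := hvt a v
  exact ⟨g b, hAut g hg a b hab⟩

lemma ArcTransitive.of_succ (hout : ∀ v : V, ∃ w, A v w) {t : ℕ}
    (h : ArcTransitive A G (t + 1)) : ArcTransitive A G t := by
  intro p q hp hq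
  obtain ⟨v, hv⟩ := hout (p (Fin.last t))
  obtain ⟨w, hw⟩ := hout (q (Fin.last t))
  obtain ⟨g, hg, hgpq⟩ := h _ _ (hp.snoc hv) (hq.snoc hw)
  exact ⟨g, hg, fun i => by simpa using hgpq i.castSucc⟩

lemma ArcTransitive.mono (hout : ∀ v : V, ∃ w, A v w) {s t : ℕ} (h : ArcTransitive A G s)
    (hts : t ≤ s) : ArcTransitive A G t := by
  induction s, hts using Nat.le_induction with
  | base => exact h
  | succ s _ ih => exact ih (h.of_succ hout)

lemma isArcSeq_two {a b c : V} (hab : A a b) (hbc : A b c) : IsArcSeq A 2 ![a, b, c] := by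
  intro i
  fin_cases i <;> simpa

lemma NormalIn.orbMk_eq_of_twoArc (hN : NormalIn N G) (h2 : ArcTransitive A G 2) {a b c : V}
    (hab : A a b) (hbc : A b c) (hac : orbMk N a = orbMk N c) {x y z : V}
    (hxy : A x y) (hyz : A y z) : orbMk N x = orbMk N z := by
  obtain ⟨g, hg, hgxyz⟩ := h2 _ _ (isArcSeq_two hab hbc) (isArcSeq_two hxy hyz)
  have hx : g a = x := by simpa using hgxyz 0
  have hz : g c = z := by simpa using hgxyz 2
  rw [← hx, ← hz]
  exact hN.orbMk_apply_eq_apply hg hac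

lemma PreservesArcs.quotArc_closed (hAut : PreservesArcs A N)
    (h : ∀ {x y z : V}, A x y → A y z → orbMk N x = orbMk N z)
    {X Y Z : Quotient (MulAction.orbitRel N V)} (hXY : quotArc A N X Y)
    (hYZ : quotArc A N Y Z) : X = Z := by
  obtain ⟨x, y, rfl, rfl, hxy⟩ := hXY
  obtain ⟨z, hyz, rfl⟩ := hAut.exists_arc_of_quotArc_left hYZ
  exact h hxy hyz

lemma Connected.quotArc (hconn : Connected A) : Connected (quotArc A N) := by
  intro U U'
  obtain ⟨a, rfl⟩ := Quotient.exists_rep U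
  obtain ⟨b, rfl⟩ := Quotient.exists_rep U'
  exact (hconn a b).lift (orbMk N) fun x y hxy =>
    hxy.imp (fun h => ⟨x, y, rfl, rfl, h⟩) (fun h => ⟨y, x, rfl, rfl, h⟩)

lemma isDigraph_quotArc (hconn : Connected A) (hAut : PreservesArcs A G)
    (hvt : VertexTransitive G) {s : ℕ} (hs : 2 ≤ s) (hat : ArcTransitive A G s)
    (hN : NormalIn N G) (horb : 3 ≤ Nat.card (Quotient (MulAction.orbitRel N V))) :
    IsDigraph (quotArc A N) := by
  intro U U' hUU' hU'U
  have hAutN := hAut.mono hN.1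
  obtain ⟨u, u', rfl, rfl, huu'⟩ := hUU'
  have h2 := hat.mono (exists_arc_of_vertexTransitive hAut hvt huu') hs
  obtain ⟨w, hwu, hw⟩ := hAutN.exists_arc_of_quotArc_right hU'U
  have hcover := hconn.quotArc.eq_or_eq_of_closed ⟨u, u', rfl, rfl, huu'⟩ hU'U
    (hAutN.quotArc_closed (hN.orbMk_eq_of_twoArc h2 hwu huu' hw))
  have := natCard_le_two_of_forall_eq_or_eq hcover
  omega

lemma VertexTransitive.quotient (hN : NormalIn N G) (hvt : VertexTransitive G)
    (U U' : Quotient (MulAction.orbitRel N V)) :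
    ∃ g ∈ G, ∀ u : V, orbMk N u = U → orbMk N (g u) = U' := by
  obtain ⟨a, rfl⟩ := Quotient.exists_rep U
  obtain ⟨b, rfl⟩ := Quotient.exists_rep U'
  obtain ⟨g, hg, rfl⟩ := hvt a b
  exact ⟨g, hg, fun u hu => hN.orbMk_apply_eq_apply hg hu⟩

lemma ArcTransitive.quotient (hAut : PreservesArcs A G) (hN : NormalIn N G) {s : ℕ}
    (hat : ArcTransitive A G s) (p q : Fin (s + 1) → Quotient (MulAction.orbitRel N V))
    (hp : IsArcSeq (quotArc A N) s p) (hq : IsArcSeq (quotArc A N) s q) :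
    ∃ g ∈ G, ∀ (i : Fin (s + 1)) (u : V), orbMk N u = p i → orbMk N (g u) = q i := by
  obtain ⟨p', hp', rfl⟩ := hp.exists_lift (hAut.mono hN.1)
  obtain ⟨q', hq', rfl⟩ := hq.exists_lift (hAut.mono hN.1)
  obtain ⟨g, hg, hgpq⟩ := hat p' q' hp' hq'
  exact ⟨g, hg, fun i u hu => (hN.orbMk_apply_eq_apply hg hu).trans (congrArg _ (hgpq i))⟩

end OrbitQuotient

theorem normal_quotient_arc_transitive_general
    (A : V → V → Prop) (G N : Subgroup (Equiv.Perm V)) (s : ℕ)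
    (hconn : Connected A) (hAut : PreservesArcs A G)
    (hvt : VertexTransitive G) (hs : 2 ≤ s) (hat : ArcTransitive A G s)
    (hN : NormalIn N G)
    (horb : 3 ≤ Nat.card (Quotient (MulAction.orbitRel N V))) :
    -- Γ_N is a digraph (no loops, and (U,U') an arc implies (U',U) not an arc)
    IsDigraph (quotArc A N) ∧
    -- Γ_N is connected
    Connected (quotArc A N) ∧
    -- N lies in the kernel of the induced action of G on V_N
    (∀ x ∈ N, ∀ v : V, orbMk N (x v) = orbMk N v) ∧
    -- the induced action of G/N on Γ_N is vertex-transitive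
    (∀ U U' : Quotient (MulAction.orbitRel N V),
      ∃ g ∈ G, ∀ u : V, orbMk N u = U → orbMk N (g u) = U') ∧
    -- the induced action of G/N on Γ_N is transitive on s-arcs
    (∀ p q : Fin (s + 1) → Quotient (MulAction.orbitRel N V),
      IsArcSeq (quotArc A N) s p → IsArcSeq (quotArc A N) s q →
      ∃ g ∈ G, ∀ (i : Fin (s + 1)) (u : V), orbMk N u = p i → orbMk N (g u) = q i) := by
  exact ⟨isDigraph_quotArc hconn hAut hvt hs hat hN horb, hconn.quotArc,
    fun _ hx => orbMk_apply_of_mem hx, hvt.quotient hN, hat.quotient hAut hN⟩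

theorem normal_quotient_arc_transitive
    [Finite V] (A : V → V → Prop) (G N : Subgroup (Equiv.Perm V)) (s : ℕ)
    (hdig : IsDigraph A) (hconn : Connected A) (hAut : PreservesArcs A G)
    (hvt : VertexTransitive G) (hs : 2 ≤ s) (hat : ArcTransitive A G s)
    (hN : NormalIn N G)
    (horb : 3 ≤ Nat.card (Quotient (MulAction.orbitRel N V))) :
    -- Γ_N is a digraph (no loops, and (U,U') an arc implies (U',U) not an arc)
    IsDigraph (quotArc A N) ∧
    -- Γ_N is connected
    Connected (quotArc A N) ∧
    -- N lies in the kernel of the induced action of G on V_N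
    (∀ x ∈ N, ∀ v : V, orbMk N (x v) = orbMk N v) ∧
    -- the induced action of G/N on Γ_N is vertex-transitive
    (∀ U U' : Quotient (MulAction.orbitRel N V),
      ∃ g ∈ G, ∀ u : V, orbMk N u = U → orbMk N (g u) = U') ∧
    -- the induced action of G/N on Γ_N is transitive on s-arcs
    (∀ p q : Fin (s + 1) → Quotient (MulAction.orbitRel N V),
      IsArcSeq (quotArc A N) s p → IsArcSeq (quotArc A N) s q →
      ∃ g ∈ G, ∀ (i : Fin (s + 1)) (u : V), orbMk N u = p i → orbMk N (g u) = q i) :=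
  normal_quotient_arc_transitive_general A G N s hconn hAut hvt hs hat hN horb

end ArcTransDigraph
end

section
/- Let Γ = (V,A) be a finite connected bipartite digraph with parts Δ, Δ', let G ≤ Aut(Γ) be vertex-transitive, and suppose Γ is (G,s)-arc-transitive with s ≥ 4. Let G^+ be the index-2 subgroup of G fixing Δ and Δ' setwise, and let Γ' = (Δ, A_2) be the bipartite half on Δ. If no G-normal quotient of Γ is isomorphic to a directed cycle C_r→ with r ≥ 3, then no G^+-normal quotient of Γ' is isomorphic to a directed cycle C_r→ with r ≥ 3. -/
namespace ArcTransDigraph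

variable {V : Type*}

/-- The digraph with arc set `B` on vertex set `α` is isomorphic to the directed cycle
`C_r→`, whose vertex set is `Z_r` with arcs `(i, i+1)`. -/
def IsoDirectedCycle {α : Type*} (B : α → α → Prop) (r : ℕ) : Prop :=
  ∃ e : α ≃ ZMod r, ∀ a b : α, B a b ↔ e b = e a + 1

/-- `Δ, Δ'` form a bipartition of the digraph with arc set `A`. -/
def IsBipartition (A : V → V → Prop) (Δ Δ' : Set V) : Prop :=
  Disjoint Δ Δ' ∧ Δ ∪ Δ' = Set.univ ∧
    ∀ u v : V, A u v → ((u ∈ Δ ∧ v ∈ Δ') ∨ (u ∈ Δ' ∧ v ∈ Δ))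

/-- The arc set `A_2` of the bipartite half of `Γ = (V,A)` on the part `Δ`. -/
def halfArc (A : V → V → Prop) (Δ Δ' : Set V) : V → V → Prop :=
  fun u w => u ∈ Δ ∧ w ∈ Δ ∧ ∃ v ∈ Δ', A u v ∧ A v w

/-- Two points of `Δ` lie in the same `N`-orbit. -/
def deltaRel (N : Subgroup (Equiv.Perm V)) (Δ : Set V) : ↥Δ → ↥Δ → Prop :=
  fun x y => ∃ n ∈ N, n (x : V) = (y : V)

/-- The arc set of the quotient `Γ'_N` of the bipartite half `Γ' = (Δ, A₂)` by the
`N`-orbit partition of `Δ`. -/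
def deltaQuotArc (A : V → V → Prop) (Δ Δ' : Set V) (N : Subgroup (Equiv.Perm V)) :
    Quot (deltaRel N Δ) → Quot (deltaRel N Δ) → Prop :=
  fun W W' => ∃ x y : ↥Δ, Quot.mk _ x = W ∧ Quot.mk _ y = W' ∧
    halfArc A Δ Δ' (x : V) (y : V)

/-!
If the quotient `Γ'_N` of the bipartite half is the directed cycle `C_r`, its labelling
`φ : Δ → ℤ_r` increases by one along every 2-arc of `Γ` starting in `Δ`. Doubling it on `Δ`, and
labelling a vertex of `Δ'` by one more than the doubled label of any of its in-neighbours, gives a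
digraph homomorphism `ψ : Γ → C_{2r}`. Because `Γ` is connected, every arc-preserving `g ∈ G`
shifts `ψ` by a constant, so the elements of `G` fixing `ψ` form a normal subgroup `M` whose orbits are, by
vertex-transitivity, exactly the fibres of `ψ`. Hence `Γ_M ≅ C_{2r}`, a `G`-normal quotient that
the hypothesis excludes.
-/

def IsCycleHom {n : ℕ} (A : V → V → Prop) (ψ : V → ZMod n) : Prop :=
  ∀ u w : V, A u w → ψ w = ψ u + 1

def cycleHomKernel {n : ℕ} (G : Subgroup (Equiv.Perm V)) (ψ : V → ZMod n) :
    Subgroup (Equiv.Perm V) where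
  carrier := {g | g ∈ G ∧ ∀ v, ψ (g v) = ψ v}
  one_mem' := ⟨G.one_mem, fun _ => rfl⟩
  mul_mem' ha hb := ⟨G.mul_mem ha.1 hb.1, fun v => (ha.2 _).trans (hb.2 v)⟩
  inv_mem' {a} ha := ⟨G.inv_mem ha.1, fun v => by simpa using (ha.2 (a⁻¹ v)).symm⟩

section Neighbours

variable {A : V → V → Prop} {G : Subgroup (Equiv.Perm V)}

theorem exists_arc_from (hAut : PreservesArcs A G) (hvt : VertexTransitive G) {u₀ w₀ : V}
    (h : A u₀ w₀) (v : V) : ∃ w, A v w := by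
  obtain ⟨g, hg, rfl⟩ := hvt u₀ v
  exact ⟨g w₀, hAut g hg _ _ h⟩

theorem exists_arc_to (hAut : PreservesArcs A G) (hvt : VertexTransitive G) {u₀ w₀ : V}
    (h : A u₀ w₀) (v : V) : ∃ u, A u v := by
  obtain ⟨g, hg, rfl⟩ := hvt w₀ v
  exact ⟨g u₀, hAut g hg _ _ h⟩

end Neighbours

namespace IsBipartition

variable {A : V → V → Prop} {Δ Δ' : Set V}

theorem mem_right_iff (h : IsBipartition A Δ Δ') (v : V) : v ∈ Δ' ↔ v ∉ Δ := by
  obtain ⟨hdisj, hcover, -⟩ := h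
  have hv : v ∈ Δ ∪ Δ' := hcover ▸ Set.mem_univ v
  exact ⟨fun h' h => Set.disjoint_left.mp hdisj h h', hv.resolve_left⟩

theorem mem_left_iff_of_arc (h : IsBipartition A Δ Δ') {u w : V} (huw : A u w) :
    w ∈ Δ ↔ u ∉ Δ := by
  rcases h.2.2 u w huw with ⟨hu, hw⟩ | ⟨hu, hw⟩
  · exact iff_of_false ((h.mem_right_iff w).1 hw) (not_not.2 hu)
  · exact iff_of_true hw ((h.mem_right_iff u).1 hu)

theorem mem_left_of_arc (h : IsBipartition A Δ Δ') {u w : V} (huw : A u w) (hw : w ∉ Δ) :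
    u ∈ Δ :=
  not_not.1 ((h.mem_left_iff_of_arc huw).not.1 hw)

end IsBipartition

def doubleHom (r : ℕ) : ZMod r →+ ZMod (2 * r) :=
  ZMod.lift r ⟨2 • Int.castAddHom (ZMod (2 * r)), by
    simpa [mul_comm] using ZMod.natCast_self (2 * r)⟩

theorem doubleHom_one (r : ℕ) : doubleHom r 1 = 2 := by
  rw [doubleHom, ← Int.cast_one, ZMod.lift_coe]
  simp

theorem exists_cycleHom_of_halfArc {A : V → V → Prop} {Δ Δ' : Set V} {r : ℕ}
    (hbip : IsBipartition A Δ Δ') (hout : ∀ v, ∃ w, A v w) (hin : ∀ v, ∃ u, A u v)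
    {φ : V → ZMod r} (hφ : ∀ u w, halfArc A Δ Δ' u w → φ w = φ u + 1) :
    ∃ ψ : V → ZMod (2 * r), IsCycleHom A ψ := by
  classical
  choose out hout using hout
  choose inn hin using hin
  -- all in-neighbours of `v ∈ Δ'` are `Γ'`-predecessors of `out v`, so they share one label
  have hinn : ∀ u v, A u v → v ∉ Δ → φ u = φ (inn v) := by
    intro u v huv hv
    have hv' := (hbip.mem_right_iff v).2 hv
    have hw := (hbip.mem_left_iff_of_arc (hout v)).2 hv
    have hu := hbip.mem_left_of_arc huv hv
    have hi := hbip.mem_left_of_arc (hin v) hv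
    exact add_right_cancel <| (hφ u (out v) ⟨hu, hw, v, hv', huv, hout v⟩).symm.trans
      (hφ (inn v) (out v) ⟨hi, hw, v, hv', hin v, hout v⟩)
  refine ⟨fun v => if v ∈ Δ then doubleHom r (φ v) else doubleHom r (φ (inn v)) + 1,
    fun u w huw => ?_⟩
  by_cases hu : u ∈ Δ
  · have hw : w ∉ Δ := (hbip.mem_left_iff_of_arc huw).not.2 (not_not.2 hu)
    simp only [if_pos hu, if_neg hw, hinn u w huw hw]
  · have hw : w ∈ Δ := (hbip.mem_left_iff_of_arc huw).2 hu
    have hiu := hbip.mem_left_of_arc (hin u) hu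
    have hstep := hφ (inn u) w ⟨hiu, hw, u, (hbip.mem_right_iff u).2 hu, hin u, huw⟩
    simp only [if_pos hw, if_neg hu, hstep, map_add, doubleHom_one]
    ring

namespace IsCycleHom

variable {n : ℕ} {A : V → V → Prop} {ψ : V → ZMod n} {G : Subgroup (Equiv.Perm V)}

theorem sub_eq_sub_of_connected (hψ : IsCycleHom A ψ) (hconn : Connected A) {f : V → V}
    (hf : ∀ u v, A u v → A (f u) (f v)) (v w : V) : ψ (f v) - ψ v = ψ (f w) - ψ w := by
  induction hconn v w with
  | refl => rfl
  | tail _ hbc ih =>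
    refine ih.trans ?_
    rcases hbc with h | h <;> rw [hψ _ _ h, hψ _ _ (hf _ _ h)] <;> ring

theorem surjective [NeZero n] [Nonempty V] (hψ : IsCycleHom A ψ) (hout : ∀ v, ∃ w, A v w) :
    Function.Surjective ψ := by
  choose out hout using hout
  obtain ⟨x⟩ := ‹Nonempty V›
  have hwalk : ∀ k : ℕ, ψ (out^[k] x) = ψ x + k := by
    intro k
    induction k with
    | zero => simp
    | succ k ih =>
      rw [Function.iterate_succ_apply', hψ _ _ (hout _), ih]
      push_cast
      ring
  intro t
  exact ⟨out^[(t - ψ x).val] x, by rw [hwalk, ZMod.natCast_zmod_val]; ring⟩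

theorem cycleHomKernel_normalIn (hψ : IsCycleHom A ψ) (hconn : Connected A)
    (hAut : PreservesArcs A G) : NormalIn (cycleHomKernel G ψ) G := by
  refine ⟨fun g hg => hg.1, fun g hg x hx => ⟨G.mul_mem (G.mul_mem hg hx.1) (G.inv_mem hg),
    fun v => ?_⟩⟩
  have hshift := hψ.sub_eq_sub_of_connected hconn (hAut g hg) (x (g⁻¹ v)) (g⁻¹ v)
  rw [hx.2] at hshift
  simpa using hshift

theorem orbitRel_cycleHomKernel_iff (hψ : IsCycleHom A ψ) (hconn : Connected A)
    (hAut : PreservesArcs A G) (hvt : VertexTransitive G) (u v : V) :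
    MulAction.orbitRel (cycleHomKernel G ψ) V u v ↔ ψ u = ψ v := by
  constructor
  · rintro ⟨m, rfl⟩
    exact m.2.2 v
  · intro h
    obtain ⟨g, hg, rfl⟩ := hvt v u
    refine ⟨⟨g, hg, fun w => ?_⟩, rfl⟩
    have hshift := hψ.sub_eq_sub_of_connected hconn (hAut g hg) w v
    rwa [h, sub_self, sub_eq_zero] at hshift

theorem cycleHomKernel_not_transitive (hψ : IsCycleHom A ψ) (hn : n ≠ 1) {u w : V}
    (huw : A u w) : ¬ ∀ x y : V, ∃ m ∈ cycleHomKernel G ψ, m x = y := by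
  intro h
  obtain ⟨m, hm, hmu⟩ := h u w
  have hfix := hm.2 u
  rw [hmu, hψ u w huw, add_eq_left] at hfix
  have : Nontrivial (ZMod n) := ZMod.nontrivial_iff.2 hn
  exact one_ne_zero hfix

theorem isoDirectedCycle_quotArc_cycleHomKernel [NeZero n] [Nonempty V]
    (hψ : IsCycleHom A ψ) (hconn : Connected A) (hAut : PreservesArcs A G)
    (hvt : VertexTransitive G) (hout : ∀ v, ∃ w, A v w) :
    IsoDirectedCycle (quotArc A (cycleHomKernel G ψ)) n := by
  let e := (Quotient.congrRight (orbitRel_cycleHomKernel_iff hψ hconn hAut hvt)).trans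
    (Setoid.quotientKerEquivOfSurjective ψ (hψ.surjective hout))
  have he : ∀ v, e (orbMk _ v) = ψ v := fun v => rfl
  refine ⟨e, fun a b => ⟨?_, fun h => ?_⟩⟩
  · rintro ⟨u, w, rfl, rfl, huw⟩
    rw [he, he]
    exact hψ u w huw
  · obtain ⟨u, rfl⟩ := Quotient.mk_surjective a
    obtain ⟨w, huw⟩ := hout u
    refine ⟨u, w, rfl, e.injective ?_, huw⟩
    rw [he, h, hψ u w huw]
    rfl

end IsCycleHom

theorem bipartite_half_no_cycle_quotient_general
    (A : V → V → Prop) (G Gp : Subgroup (Equiv.Perm V))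
    (Δ Δ' : Set V)
    (hconn : Connected A) (hAut : PreservesArcs A G)
    (hvt : VertexTransitive G)
    (hbip : IsBipartition A Δ Δ')
    -- no G-normal quotient of Γ is isomorphic to a directed cycle C_r→ with r ≥ 3
    (hnc : ∀ r : ℕ, 3 ≤ r → ∀ M : Subgroup (Equiv.Perm V), NormalIn M G →
      (¬ ∀ u v : V, ∃ m ∈ M, m u = v) → ¬ IsoDirectedCycle (quotArc A M) r) :
    -- then no G⁺-normal quotient of the bipartite half Γ' = (Δ, A₂) is isomorphic
    -- to a directed cycle C_r→ with r ≥ 3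
    ∀ r : ℕ, 3 ≤ r → ∀ N : Subgroup (Equiv.Perm V), NormalIn N Gp →
      (¬ ∀ x ∈ Δ, ∀ y ∈ Δ, ∃ n ∈ N, n x = y) →
      ¬ IsoDirectedCycle (deltaQuotArc A Δ Δ' N) r := by
  classical
  rintro r hr N - - ⟨e, he⟩
  obtain ⟨x, -, -, -, -, -, v, -, hxv, -⟩ : deltaQuotArc A Δ Δ' N (e.symm 0) (e.symm 1) :=
    (he _ _).2 (by simp)
  have hout := exists_arc_from hAut hvt hxv
  obtain ⟨ψ, hψ⟩ := exists_cycleHom_of_halfArc hbip hout (exists_arc_to hAut hvt hxv)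
    (φ := fun v => if h : v ∈ Δ then e (Quot.mk _ ⟨v, h⟩) else 0) fun u w huw => by
      simp only [dif_pos huw.1, dif_pos huw.2.1]
      exact (he _ _).1 ⟨_, _, rfl, rfl, huw⟩
  have : NeZero (2 * r) := ⟨by omega⟩
  have : Nonempty V := ⟨x⟩
  exact hnc (2 * r) (by omega) _ (hψ.cycleHomKernel_normalIn hconn hAut)
    (hψ.cycleHomKernel_not_transitive (by omega) hxv)
    (hψ.isoDirectedCycle_quotArc_cycleHomKernel hconn hAut hvt hout)

theorem bipartite_half_no_cycle_quotient
    [Finite V] (A : V → V → Prop) (G Gp : Subgroup (Equiv.Perm V)) (s : ℕ)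
    (Δ Δ' : Set V)
    (hdig : IsDigraph A) (hconn : Connected A) (hAut : PreservesArcs A G)
    (hvt : VertexTransitive G) (hs : 4 ≤ s) (hat : ArcTransitive A G s)
    (hbip : IsBipartition A Δ Δ')
    (hGp : ∀ g : Equiv.Perm V, g ∈ Gp ↔
      (g ∈ G ∧ (∀ v : V, v ∈ Δ ↔ g v ∈ Δ) ∧ (∀ v : V, v ∈ Δ' ↔ g v ∈ Δ')))
    (hidx : (Gp.subgroupOf G).index = 2)
    -- no G-normal quotient of Γ is isomorphic to a directed cycle C_r→ with r ≥ 3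
    (hnc : ∀ r : ℕ, 3 ≤ r → ∀ M : Subgroup (Equiv.Perm V), NormalIn M G →
      (¬ ∀ u v : V, ∃ m ∈ M, m u = v) → ¬ IsoDirectedCycle (quotArc A M) r) :
    -- then no G⁺-normal quotient of the bipartite half Γ' = (Δ, A₂) is isomorphic
    -- to a directed cycle C_r→ with r ≥ 3
    ∀ r : ℕ, 3 ≤ r → ∀ N : Subgroup (Equiv.Perm V), NormalIn N Gp →
      (¬ ∀ x ∈ Δ, ∀ y ∈ Δ, ∃ n ∈ N, n x = y) →
      ¬ IsoDirectedCycle (deltaQuotArc A Δ Δ' N) r :=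
  bipartite_half_no_cycle_quotient_general A G Gp Δ Δ' hconn hAut hvt hbip hnc

end ArcTransDigraph
end

section
/- Let Γ be a finite connected digraph that is not a directed cycle, let G ≤ Aut(Γ) be bi-quasiprimitive on the vertex set, and suppose Γ is (G,s)-arc-transitive with s ≥ 2. Let G^+ be an index-2 subgroup of G having two orbits Δ and Δ' on the vertices, and let H be the permutation group induced by G^+ on Δ. Then the actions of G^+ on Δ and on Δ' are both faithful (the pointwise stabilizers in G^+ of Δ and of Δ' are trivial); consequently, after identifying Δ' with Δ by an element g ∈ G \ G^+ and regarding G ≤ H wr Sym(2), G^+ = Diag_φ(H × H) = {(h, h^φ) : h ∈ H} for some automorphism φ of H, and φ² is the inner automorphism of H induced by the element x ∈ H with g = (x,1)(1,2). -/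
/-!
If the pointwise stabiliser `K` of `Δ` in `G⁺` were nontrivial, then `K × K'`, with `K'` the
pointwise stabiliser of `Δ'`, would be a nontrivial normal subgroup of `G` (every element of `G`
fixes or swaps the two `G⁺`-orbits), so by bi-quasiprimitivity its orbits are exactly `Δ` and
`Δ'`; as `K'` fixes `Δ'` pointwise, `K` alone is transitive on `Δ'`. By connectivity some arc
joins a vertex `a ∈ Δ` to `Δ'`, and `K`, which fixes `a`, spreads it to arcs between `a` and every
vertex of `Δ'`, in particular `g a` and `g⁻¹ a`. Applying `g` to the second one gives an arc
between `g a` and `a` in the reverse direction, against asymmetry. By symmetry `G⁺` is faithful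
on `Δ'` too; `φ` is then conjugation by `g⁻¹` read through `G⁺ ≅ H`, and `φ²` is conjugation by
`g² ∈ G⁺`.
-/

namespace ArcTransDigraph

variable {V : Type*}

/-- `G` is bi-quasiprimitive on `V`: every nontrivial normal subgroup has at most two
orbits, and some normal subgroup has exactly two orbits. -/
def BiQuasiprimitive (G : Subgroup (Equiv.Perm V)) : Prop :=
  (∀ L : Subgroup (Equiv.Perm V), NormalIn L G → L ≠ ⊥ →
    Nat.card (Quotient (MulAction.orbitRel L V)) ≤ 2) ∧
  (∃ L : Subgroup (Equiv.Perm V), NormalIn L G ∧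
    Nat.card (Quotient (MulAction.orbitRel L V)) = 2)

/-- The homomorphism `G⁺ → Sym(Δ)` induced by restriction to the invariant set `Δ`;
its image is the permutation group `H` induced by `G⁺` on `Δ`. -/
def inducedHom (Δ : Set V) (Gp : Subgroup (Equiv.Perm V))
    (h : ∀ b ∈ Gp, ∀ v : V, v ∈ Δ ↔ b v ∈ Δ) : Gp →* Equiv.Perm ↥Δ where
  toFun b := Equiv.Perm.subtypePerm (b : Equiv.Perm V) (fun v => (h (b : Equiv.Perm V) b.2 v).symm)
  map_one' := by
    ext x
    simp [Equiv.Perm.subtypePerm]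
  map_mul' a b := by
    ext x
    simp [Equiv.Perm.subtypePerm]

/-- The homomorphism `G⁺ → Sym(Δ)` recording the action of `G⁺` on `Δ'` after
identifying `Δ'` with `Δ` by means of the element `g` (which maps `Δ` onto `Δ'`):
`b` is sent to the permutation `x ↦ g⁻¹(b(g x))` of `Δ`. -/
def conjHom (Δ Δ' : Set V) (Gp : Subgroup (Equiv.Perm V)) (g : Equiv.Perm V)
    (h' : ∀ b ∈ Gp, ∀ v : V, v ∈ Δ' ↔ b v ∈ Δ')
    (hg : ∀ v : V, v ∈ Δ ↔ g v ∈ Δ') : Gp →* Equiv.Perm ↥Δ where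
  toFun b := Equiv.Perm.subtypePerm (g⁻¹ * (b : Equiv.Perm V) * g)
    (by
      intro v
      have h1 := hg v
      have h2 := h' (b : Equiv.Perm V) b.2 (g v)
      have h3 := hg (g⁻¹ ((b : Equiv.Perm V) (g v)))
      simp only [Equiv.Perm.mul_apply]
      rw [h1, h2, h3]
      simp)
  map_one' := by
    ext x
    simp [Equiv.Perm.subtypePerm]
  map_mul' a b := by
    ext x
    simp [Equiv.Perm.subtypePerm]

end ArcTransDigraph

open Equiv MulAction

namespace Subgroup

variable {M : Type*} [Group M] {G H : Subgroup M}

theorem mul_mem_iff_of_index_subgroupOf_eq_two (hidx : (H.subgroupOf G).index = 2)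
    {a b : M} (ha : a ∈ G) (hb : b ∈ G) : a * b ∈ H ↔ (a ∈ H ↔ b ∈ H) := by
  simpa [mem_subgroupOf] using mul_mem_iff_of_index_two hidx (a := ⟨a, ha⟩) (b := ⟨b, hb⟩)

theorem le_normalizer_of_index_subgroupOf_eq_two (hHG : H ≤ G)
    (hidx : (H.subgroupOf G).index = 2) : G ≤ normalizer (H : Set M) :=
  (normal_subgroupOf_iff_le_normalizer hHG).mp (normal_of_index_eq_two hidx)

end Subgroup

theorem Finite.eq_of_ne_of_ne_of_card_le_two {X : Type*} [Finite X] {a b c : X}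
    (hX : Nat.card X ≤ 2) (hac : a ≠ c) (hbc : b ≠ c) : a = b := by
  have := Fintype.ofFinite X
  by_contra hab
  rw [Nat.card_eq_fintype_card] at hX
  exact absurd (Fintype.two_lt_card_iff.mpr ⟨a, b, c, hab, hac, hbc⟩) (by omega)

theorem MulAut.congr_ofInjective_apply {M P : Type*} [Group M] [Group P] {f : M →* P}
    (hf : Function.Injective f) (α : MulAut M) (m : M) :
    MulAut.congr (MonoidHom.ofInjective hf) α ⟨f m, m, rfl⟩ = ⟨f (α m), α m, rfl⟩ := by
  have he : ∀ m, (⟨f m, m, rfl⟩ : f.range) = MonoidHom.ofInjective hf m :=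
    fun m => Subtype.ext (MonoidHom.ofInjective_apply hf).symm
  simp only [he, MulAut.congr_apply, MulEquiv.trans_apply, MulEquiv.symm_apply_apply]

namespace ArcTransDigraph

variable {V : Type*}

section PointwiseStabilizer

variable {G Gp : Subgroup (Perm V)} {Δ : Set V} {g : Perm V}

theorem preserves_or_swaps_of_index_two (hidx : (Gp.subgroupOf G).index = 2)
    (hΔ : ∀ b ∈ Gp, ∀ v : V, v ∈ Δ ↔ b v ∈ Δ) (hgG : g ∈ G) (hgnot : g ∉ Gp)
    (hgswap : ∀ v : V, v ∈ Δ ↔ g v ∈ Δᶜ) {q : Perm V} (hq : q ∈ G) :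
    (∀ v, v ∈ Δ ↔ q v ∈ Δ) ∨ (∀ v, v ∈ Δ ↔ q v ∈ Δᶜ) := by
  by_cases hqGp : q ∈ Gp
  · exact .inl (hΔ q hqGp)
  · have hgq : g⁻¹ * q ∈ Gp :=
      (Subgroup.mul_mem_iff_of_index_subgroupOf_eq_two hidx (G.inv_mem hgG) hq).mpr
        (by simp [hgnot, hqGp])
    refine .inr fun v => (hΔ _ hgq v).trans ?_
    rw [hgswap, Perm.mul_apply, Perm.coe_inv, apply_symm_apply]

theorem conj_mem_inf_fixingSubgroup {S T : Set V} {q x : Perm V}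
    (hq : q ∈ Subgroup.normalizer (Gp : Set (Perm V))) (hST : ∀ v, v ∈ S ↔ q v ∈ T)
    (hx : x ∈ Gp ⊓ fixingSubgroup (Perm V) S) :
    q * x * q⁻¹ ∈ Gp ⊓ fixingSubgroup (Perm V) T := by
  obtain ⟨hxGp, hxS⟩ := Subgroup.mem_inf.mp hx
  refine Subgroup.mem_inf.mpr ⟨(Subgroup.mem_normalizer_iff.mp hq x).mp hxGp, ?_⟩
  rw [mem_fixingSubgroup_iff] at hxS ⊢
  intro v hv
  have : q⁻¹ v ∈ S := (hST _).mpr (by simpa using hv)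
  simp only [Perm.smul_def, Perm.mul_apply] at hxS ⊢
  rw [hxS _ this, Perm.coe_inv, apply_symm_apply]

theorem normalIn_sup_inf_fixingSubgroup (hGpG : Gp ≤ G) (hidx : (Gp.subgroupOf G).index = 2)
    (hΔ : ∀ b ∈ Gp, ∀ v : V, v ∈ Δ ↔ b v ∈ Δ) (hgG : g ∈ G) (hgnot : g ∉ Gp)
    (hgswap : ∀ v : V, v ∈ Δ ↔ g v ∈ Δᶜ) :
    NormalIn ((Gp ⊓ fixingSubgroup (Perm V) Δ) ⊔ (Gp ⊓ fixingSubgroup (Perm V) Δᶜ)) G := by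
  set N := (Gp ⊓ fixingSubgroup (Perm V) Δ) ⊔ (Gp ⊓ fixingSubgroup (Perm V) Δᶜ)
  refine ⟨sup_le (inf_le_left.trans hGpG) (inf_le_left.trans hGpG), fun q hq x hx => ?_⟩
  have hqN := Subgroup.le_normalizer_of_index_subgroupOf_eq_two hGpG hidx hq
  suffices N ≤ N.comap (MulAut.conj q).toMonoidHom from this hx
  rcases preserves_or_swaps_of_index_two hidx hΔ hgG hgnot hgswap hq with h | h
  · exact sup_le (fun y hy => Subgroup.mem_sup_left (conj_mem_inf_fixingSubgroup hqN h hy))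
      (fun y hy => Subgroup.mem_sup_right
        (conj_mem_inf_fixingSubgroup hqN (fun v => (h v).not) hy))
  · exact sup_le (fun y hy => Subgroup.mem_sup_right (conj_mem_inf_fixingSubgroup hqN h hy))
      (fun y hy => Subgroup.mem_sup_left
        (conj_mem_inf_fixingSubgroup hqN (fun v => (h v).not.trans not_not) hy))

theorem exists_mem_apply_eq_of_mem_sup {K K' : Subgroup (Perm V)} {S : Set V}
    (hK : ∀ x ∈ K, ∀ v ∈ S, x v ∈ S) (hK' : K' ≤ fixingSubgroup (Perm V) S)
    {n : Perm V} (hn : n ∈ K ⊔ K') : ∀ u ∈ S, ∃ x ∈ K, x u = n u := by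
  have hgen : ∀ y ∈ (K : Set (Perm V)) ∪ K', ∀ u ∈ S, ∃ x ∈ K, x u = y u := by
    rintro y (hy | hy) u hu
    · exact ⟨y, hy, rfl⟩
    · exact ⟨1, K.one_mem, ((mem_fixingSubgroup_iff _).mp (hK' hy) u hu).symm⟩
  rw [Subgroup.sup_eq_closure] at hn
  induction hn using Subgroup.closure_induction'' with
  | mem y hy => exact hgen y hy
  | inv_mem y hy =>
    refine hgen y⁻¹ ?_
    rcases hy with hy | hy
    exacts [.inl (K.inv_mem hy), .inr (K'.inv_mem hy)]
  | one => exact fun u _ => ⟨1, K.one_mem, rfl⟩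
  | mul y z _ _ ihy ihz =>
    intro u hu
    obtain ⟨x, hxK, hxu⟩ := ihz u hu
    obtain ⟨x', hx'K, hx'u⟩ := ihy (z u) (hxu ▸ hK x hxK u hu)
    exact ⟨x' * x, K.mul_mem hx'K hxK, by rw [Perm.mul_apply, hxu, hx'u, Perm.mul_apply]⟩

theorem exists_apply_eq_of_card_orbits_le_two [Finite V] {N : Subgroup (Perm V)} {S : Set V}
    (hN : ∀ n ∈ N, ∀ v : V, v ∈ S ↔ n v ∈ S) (hcard : Nat.card (Quotient (orbitRel N V)) ≤ 2)
    {a c w : V} (ha : a ∈ S) (hc : c ∉ S) (hw : w ∉ S) : ∃ n ∈ N, n c = w := by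
  have hsep : ∀ u ∈ S, ∀ v ∉ S,
      (Quotient.mk _ v : Quotient (orbitRel N V)) ≠ Quotient.mk _ u := by
    intro u hu v hv huv
    obtain ⟨n, rfl⟩ := mem_orbit_iff.mp (Quotient.exact huv.symm)
    exact hv ((hN n n.2 v).mpr hu)
  obtain ⟨n, hn⟩ := mem_orbit_iff.mp
    (Quotient.exact (Finite.eq_of_ne_of_ne_of_card_le_two hcard (hsep a ha w hw) (hsep a ha c hc)))
  exact ⟨n, n.2, hn⟩

end PointwiseStabilizer

section Arcs

variable {A : V → V → Prop} {S : Set V}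

theorem exists_arc_across (hconn : Connected A) {u v : V} (hu : u ∈ S) (hv : v ∉ S) :
    ∃ a ∈ S, ∃ c ∉ S, A a c ∨ A c a := by
  induction hconn u v with
  | refl => exact absurd hu hv
  | @tail b c _ hbc ih =>
    by_cases hb : b ∈ S
    · exact ⟨b, hb, c, hv, hbc⟩
    · exact ih hb

theorem not_arc_of_transitive_on_compl (hdig : IsDigraph A) {K : Subgroup (Perm V)}
    (hKA : PreservesArcs A K) (hKS : K ≤ fixingSubgroup (Perm V) S)
    (hKtrans : ∀ c ∉ S, ∀ w ∉ S, ∃ x ∈ K, x c = w) {g : Perm V}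
    (hgA : ∀ u v, A u v → A (g u) (g v)) (hgswap : ∀ v : V, v ∈ S ↔ g v ∈ Sᶜ)
    {a c : V} (ha : a ∈ S) (hc : c ∉ S) : ¬ A a c := by
  intro hac
  have hout : ∀ w ∉ S, A a w := by
    intro w hw
    obtain ⟨x, hxK, rfl⟩ := hKtrans c hc w hw
    have hxa : x a = a := (mem_fixingSubgroup_iff _).mp (hKS hxK) a ha
    simpa only [hxa] using hKA x hxK a c hac
  have hga : A a (g a) := hout _ ((hgswap a).mp ha)
  have hag : A (g a) a := by
    simpa using hgA _ _ (hout (g⁻¹ a) fun h => (hgswap _).mp h (by simpa using ha))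
  exact hdig _ _ hga hag

end Arcs

theorem eq_one_of_fixes_of_biQuasiprimitive [Finite V] {A : V → V → Prop}
    {G Gp : Subgroup (Perm V)} {Δ : Set V} {g : Perm V}
    (hdig : IsDigraph A) (hconn : Connected A) (hAut : PreservesArcs A G)
    (hbqp : BiQuasiprimitive G) (hGpG : Gp ≤ G) (hidx : (Gp.subgroupOf G).index = 2)
    (hΔ : ∀ b ∈ Gp, ∀ v : V, v ∈ Δ ↔ b v ∈ Δ) (hgG : g ∈ G) (hgnot : g ∉ Gp)
    (hgswap : ∀ v : V, v ∈ Δ ↔ g v ∈ Δᶜ) {b : Perm V} (hb : b ∈ Gp) (hbΔ : ∀ v ∈ Δ, b v = v) :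
    b = 1 := by
  set K := Gp ⊓ fixingSubgroup (Perm V) Δ
  set N := K ⊔ (Gp ⊓ fixingSubgroup (Perm V) Δᶜ)
  by_contra hb1
  have hK : K ≠ ⊥ := fun hK => hb1 <| Subgroup.mem_bot.mp <|
    hK ▸ Subgroup.mem_inf.mpr ⟨hb, (mem_fixingSubgroup_iff _).mpr hbΔ⟩
  obtain ⟨c, hbc⟩ := not_forall.mp fun h => hb1 (Equiv.ext h)
  have hc : c ∉ Δ := fun hc => hbc (hbΔ c hc)
  have hgc : g c ∈ Δ := not_not.mp (mt (hgswap c).mpr hc)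
  have hNG := normalIn_sup_inf_fixingSubgroup hGpG hidx hΔ hgG hgnot hgswap
  have hNGp : N ≤ Gp := sup_le inf_le_left inf_le_left
  have hNΔ : ∀ n ∈ N, ∀ v, v ∈ Δ ↔ n v ∈ Δ := fun n hn => hΔ n (hNGp hn)
  have hKtrans : ∀ u ∉ Δ, ∀ w ∉ Δ, ∃ x ∈ K, x u = w := by
    intro u hu w hw
    obtain ⟨n, hn, rfl⟩ := exists_apply_eq_of_card_orbits_le_two hNΔ
      (hbqp.1 N hNG (ne_bot_of_le_ne_bot hK le_sup_left)) hgc hu hw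
    exact exists_mem_apply_eq_of_mem_sup (S := Δᶜ)
      (fun x hx v => (hΔ x (Subgroup.mem_inf.mp hx).1 v).not.mp) inf_le_right hn u hu
  have hKG : K ≤ G := inf_le_left.trans hGpG
  have hKΔ : K ≤ fixingSubgroup (Perm V) Δ := inf_le_right
  obtain ⟨a, ha, d, hd, had | hda⟩ := exists_arc_across hconn hgc hc
  · exact not_arc_of_transitive_on_compl hdig (fun x hx => hAut x (hKG hx)) hKΔ hKtrans
      (hAut g hgG) hgswap ha hd had
  · exact not_arc_of_transitive_on_compl (A := flip A) (fun u v h => hdig v u h)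
      (fun x hx u v => hAut x (hKG hx) v u) hKΔ hKtrans
      (fun u v => hAut g hgG v u) hgswap ha hd hda

theorem inducedHom_injective {Δ : Set V} {Gp : Subgroup (Perm V)}
    (hΔ : ∀ b ∈ Gp, ∀ v : V, v ∈ Δ ↔ b v ∈ Δ)
    (hfaith : ∀ b ∈ Gp, (∀ v ∈ Δ, b v = v) → b = 1) : Function.Injective (inducedHom Δ Gp hΔ) := by
  refine (injective_iff_map_eq_one _).mpr fun b hb => Subtype.ext (hfaith b b.2 fun v hv => ?_)
  simpa [inducedHom] using congrArg (fun e : Perm Δ => (e ⟨v, hv⟩ : V)) hb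

theorem biquasiprimitive_diagonal_structure_general
    [Finite V] (A : V → V → Prop) (G Gp : Subgroup (Equiv.Perm V))
    (Δ Δ' : Set V) (g : Equiv.Perm V)
    (hdig : IsDigraph A) (hconn : Connected A) (hAut : PreservesArcs A G)
    (hbqp : BiQuasiprimitive G)
    (hGpG : Gp ≤ G) (hidx : (Gp.subgroupOf G).index = 2)
    -- Δ and Δ' are the two orbits of G⁺ on the vertex set
    (hdis : Disjoint Δ Δ') (hcov : Δ ∪ Δ' = Set.univ)
    (hΔ : ∀ b ∈ Gp, ∀ v : V, v ∈ Δ ↔ b v ∈ Δ)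
    (hΔ' : ∀ b ∈ Gp, ∀ v : V, v ∈ Δ' ↔ b v ∈ Δ')
    -- g ∈ G ∖ G⁺ interchanges Δ and Δ', and g² ∈ G⁺
    (hgG : g ∈ G) (hgnot : g ∉ Gp)
    (hgswap : ∀ v : V, v ∈ Δ ↔ g v ∈ Δ') (hg2 : g * g ∈ Gp) :
    -- the actions of G⁺ on Δ and on Δ' are faithful
    (∀ b ∈ Gp, (∀ v ∈ Δ, b v = v) → b = 1) ∧
    (∀ b ∈ Gp, (∀ v ∈ Δ', b v = v) → b = 1) ∧
    -- G⁺ = Diag_φ(H × H) for some automorphism φ of H = (inducedHom Δ Gp hΔ).range,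
    -- i.e. for every b ∈ G⁺ the action of b on Δ' (transported to Δ via g) is φ of
    -- its action on Δ; and φ² is the inner automorphism induced by the element of H
    -- corresponding to x (where g = (x,1)(1,2)), namely the permutation of Δ induced
    -- by g²
    (∃ φ : (inducedHom Δ Gp hΔ).range ≃* (inducedHom Δ Gp hΔ).range,
      (∀ b : Gp,
        (conjHom Δ Δ' Gp g hΔ' hgswap b : Equiv.Perm ↥Δ) =
          ((φ ⟨inducedHom Δ Gp hΔ b, MonoidHom.mem_range.mpr ⟨b, rfl⟩⟩ :
            (inducedHom Δ Gp hΔ).range) : Equiv.Perm ↥Δ)) ∧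
      (∀ h : (inducedHom Δ Gp hΔ).range,
        φ (φ h) =
          (⟨inducedHom Δ Gp hΔ ⟨g * g, hg2⟩,
            MonoidHom.mem_range.mpr ⟨⟨g * g, hg2⟩, rfl⟩⟩ :
              (inducedHom Δ Gp hΔ).range)⁻¹ * h *
          ⟨inducedHom Δ Gp hΔ ⟨g * g, hg2⟩,
            MonoidHom.mem_range.mpr ⟨⟨g * g, hg2⟩, rfl⟩⟩)) := by
  obtain rfl : Δ' = Δᶜ := (IsCompl.compl_eq ⟨hdis, codisjoint_iff.mpr hcov⟩).symm
  have hfaith : ∀ b ∈ Gp, (∀ v ∈ Δ, b v = v) → b = 1 := fun _ =>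
    eq_one_of_fixes_of_biQuasiprimitive hdig hconn hAut hbqp hGpG hidx hΔ hgG hgnot hgswap
  refine ⟨hfaith, fun _ => eq_one_of_fixes_of_biQuasiprimitive hdig hconn hAut hbqp hGpG hidx
    hΔ' hgG hgnot fun v => (hgswap v).not, ?_⟩
  have hinj := inducedHom_injective hΔ hfaith
  have hgN := Subgroup.le_normalizer_of_index_subgroupOf_eq_two hGpG hidx (G.inv_mem hgG)
  -- φ is conjugation by g⁻¹ on G⁺, transported to H through the faithful restriction to Δ
  set α := Gp.normalizerMonoidHom ⟨g⁻¹, hgN⟩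
  refine ⟨MulAut.congr (MonoidHom.ofInjective hinj) α, fun b => ?_, fun h => ?_⟩
  · rw [MulAut.congr_ofInjective_apply]
    ext x
    simp [conjHom, inducedHom, α]
  · obtain ⟨_, b, rfl⟩ := h
    have hαα : α (α b) = ⟨g * g, hg2⟩⁻¹ * b * ⟨g * g, hg2⟩ := by
      refine Subtype.ext ?_
      simp only [α, Subgroup.normalizerMonoidHom_apply_apply_coe, Subgroup.coe_mul,
        InvMemClass.coe_inv]
      group
    rw [MulAut.congr_ofInjective_apply, MulAut.congr_ofInjective_apply, hαα]
    exact Subtype.ext (by simp only [map_mul, map_inv, Subgroup.coe_mul, Subgroup.coe_inv])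

theorem biquasiprimitive_diagonal_structure
    [Finite V] (A : V → V → Prop) (G Gp : Subgroup (Equiv.Perm V)) (s : ℕ)
    (Δ Δ' : Set V) (g : Equiv.Perm V)
    (hdig : IsDigraph A) (hconn : Connected A) (hAut : PreservesArcs A G)
    (hvt : VertexTransitive G) (hs : 2 ≤ s) (hat : ArcTransitive A G s)
    (hnotcyc : ∀ r : ℕ, 3 ≤ r → ¬ IsoDirectedCycle A r)
    (hbqp : BiQuasiprimitive G)
    (hGpG : Gp ≤ G) (hidx : (Gp.subgroupOf G).index = 2)
    -- Δ and Δ' are the two orbits of G⁺ on the vertex set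
    (hdis : Disjoint Δ Δ') (hcov : Δ ∪ Δ' = Set.univ)
    (hΔ : ∀ b ∈ Gp, ∀ v : V, v ∈ Δ ↔ b v ∈ Δ)
    (hΔ' : ∀ b ∈ Gp, ∀ v : V, v ∈ Δ' ↔ b v ∈ Δ')
    (htransΔ : ∀ u ∈ Δ, ∀ v ∈ Δ, ∃ b ∈ Gp, b u = v)
    (htransΔ' : ∀ u ∈ Δ', ∀ v ∈ Δ', ∃ b ∈ Gp, b u = v)
    -- g ∈ G ∖ G⁺ interchanges Δ and Δ', and g² ∈ G⁺
    (hgG : g ∈ G) (hgnot : g ∉ Gp)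
    (hgswap : ∀ v : V, v ∈ Δ ↔ g v ∈ Δ') (hg2 : g * g ∈ Gp) :
    -- the actions of G⁺ on Δ and on Δ' are faithful
    (∀ b ∈ Gp, (∀ v ∈ Δ, b v = v) → b = 1) ∧
    (∀ b ∈ Gp, (∀ v ∈ Δ', b v = v) → b = 1) ∧
    -- G⁺ = Diag_φ(H × H) for some automorphism φ of H = (inducedHom Δ Gp hΔ).range,
    -- i.e. for every b ∈ G⁺ the action of b on Δ' (transported to Δ via g) is φ of
    -- its action on Δ; and φ² is the inner automorphism induced by the element of H
    -- corresponding to x (where g = (x,1)(1,2)), namely the permutation of Δ induced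
    -- by g²
    (∃ φ : (inducedHom Δ Gp hΔ).range ≃* (inducedHom Δ Gp hΔ).range,
      (∀ b : Gp,
        (conjHom Δ Δ' Gp g hΔ' hgswap b : Equiv.Perm ↥Δ) =
          ((φ ⟨inducedHom Δ Gp hΔ b, MonoidHom.mem_range.mpr ⟨b, rfl⟩⟩ :
            (inducedHom Δ Gp hΔ).range) : Equiv.Perm ↥Δ)) ∧
      (∀ h : (inducedHom Δ Gp hΔ).range,
        φ (φ h) =
          (⟨inducedHom Δ Gp hΔ ⟨g * g, hg2⟩,
            MonoidHom.mem_range.mpr ⟨⟨g * g, hg2⟩, rfl⟩⟩ :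
              (inducedHom Δ Gp hΔ).range)⁻¹ * h *
          ⟨inducedHom Δ Gp hΔ ⟨g * g, hg2⟩,
            MonoidHom.mem_range.mpr ⟨⟨g * g, hg2⟩, rfl⟩⟩)) :=
  biquasiprimitive_diagonal_structure_general A G Gp Δ Δ' g hdig hconn hAut hbqp hGpG hidx hdis hcov
    hΔ hΔ' hgG hgnot hgswap hg2

end ArcTransDigraph
end

section
/- With the notation of the doubling construction: for every r ≥ 1, each 2r-arc (u_0, u_1, …, u_{2r}) of Γ with u_0 ∈ Γ_0 satisfies u_{2i} = (v_i, w_i, 0) for 0 ≤ i ≤ r and u_{2i+1} = (v_i, w_{i+1}, 1) for 0 ≤ i ≤ r−1, where (v_0, v_1, …, v_r) and (w_0, w_1, …, w_r) are r-arcs of Δ. -/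
namespace Doubling

variable {W : Type*}

/-- The arc set of a digraph is asymmetric (in particular loopless). -/
def IsDigraph {α : Type*} (B : α → α → Prop) : Prop := ∀ u v : α, B u v → ¬ B v u

/-- Connectivity of the underlying undirected graph. -/
def Connected {α : Type*} (B : α → α → Prop) : Prop :=
  ∀ u v : α, Relation.ReflTransGen (fun a b => B a b ∨ B b a) u v

/-- The underlying undirected graph is bipartite. -/
def Bipartite {α : Type*} (B : α → α → Prop) : Prop :=
  ∃ S : Set α, ∀ u v : α, B u v → (u ∈ S ↔ v ∉ S)

/-- `G` consists of automorphisms of the digraph with arc set `B`. -/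
def PreservesArcs {α : Type*} (B : α → α → Prop) (G : Subgroup (Equiv.Perm α)) : Prop :=
  ∀ g ∈ G, ∀ u v : α, B u v → B (g u) (g v)

/-- `G` is transitive on vertices. -/
def VertexTransitive {α : Type*} (G : Subgroup (Equiv.Perm α)) : Prop :=
  ∀ u v : α, ∃ g ∈ G, g u = v

/-- `p` is an `s`-arc of the digraph with arc set `B`. -/
def IsArcSeq {α : Type*} (B : α → α → Prop) (s : ℕ) (p : Fin (s + 1) → α) : Prop :=
  ∀ i : Fin s, B (p i.castSucc) (p i.succ)

/-- `G` is transitive on the `s`-arcs of the digraph with arc set `B`. -/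
def ArcTransitive {α : Type*} (B : α → α → Prop) (G : Subgroup (Equiv.Perm α)) (s : ℕ) : Prop :=
  ∀ p q : Fin (s + 1) → α, IsArcSeq B s p → IsArcSeq B s q →
    ∃ g ∈ G, ∀ i : Fin (s + 1), g (p i) = q i

/-- Every vertex of the digraph with arc set `B` has out-valency and in-valency `k`. -/
def Valency {α : Type*} (B : α → α → Prop) (k : ℕ) : Prop :=
  ∀ v : α, {w : α | B v w}.ncard = k ∧ {w : α | B w v}.ncard = k

/-- The arc set of the doubling digraph `Γ` on `VΔ × VΔ × Z₂`:
`(v,w,0) → (v',w',1)` iff `v' = v` and `(w,w') ∈ AΔ`, and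
`(v,w,1) → (v',w',0)` iff `(v,v') ∈ AΔ` and `w' = w`. -/
def doubleArc (B : W → W → Prop) :
    W × W × ZMod 2 → W × W × ZMod 2 → Prop :=
  fun u u' =>
    (u.2.2 = 0 ∧ u'.2.2 = 1 ∧ u'.1 = u.1 ∧ B u.2.1 u'.2.1) ∨
    (u.2.2 = 1 ∧ u'.2.2 = 0 ∧ B u.1 u'.1 ∧ u.2.1 = u'.2.1)

/-- The permutation `(x,y) : (v,w,δ) ↦ (v^x, w^y, δ)` of `VΔ × VΔ × Z₂`. -/
def pairPerm (x y : Equiv.Perm W) : Equiv.Perm (W × W × ZMod 2) :=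
  Equiv.prodCongr x (Equiv.prodCongr y (Equiv.refl (ZMod 2)))

/-- The embedding of `Sym(VΔ) × Sym(VΔ)` into `Sym(VΔ × VΔ × Z₂)`. -/
def pairHom : Equiv.Perm W × Equiv.Perm W →* Equiv.Perm (W × W × ZMod 2) where
  toFun p := pairPerm p.1 p.2
  map_one' := by
    ext u <;> simp [pairPerm]
  map_mul' a b := by
    ext u <;> simp [pairPerm]

/-- The permutation `τ : (v,w,δ) ↦ (w,v,δ+1)` of `VΔ × VΔ × Z₂`. -/
def tauPerm : Equiv.Perm (W × W × ZMod 2) where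
  toFun u := (u.2.1, u.1, u.2.2 + 1)
  invFun u := (u.2.1, u.1, u.2.2 + 1)
  left_inv := by
    have h : ∀ z : ZMod 2, z + 1 + 1 = z := by decide
    intro u
    simp [h]
  right_inv := by
    have h : ∀ z : ZMod 2, z + 1 + 1 = z := by decide
    intro u
    simp [h]

/-- The permutation `t = (g,1)τ : (v,w,δ) ↦ (w, v^g, δ+1)`. -/
def tPerm (g : Equiv.Perm W) : Equiv.Perm (W × W × ZMod 2) :=
  tauPerm * pairPerm g 1

/-- The group `G⁺ = X × X` acting coordinatewise on `VΔ × VΔ × Z₂`. -/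
def doubleGroupPlus (X : Subgroup (Equiv.Perm W)) : Subgroup (Equiv.Perm (W × W × ZMod 2)) :=
  Subgroup.map pairHom (X.prod X)

/-- The group `G = ⟨G⁺, t⟩`. -/
def doubleGroup (X : Subgroup (Equiv.Perm W)) (g : Equiv.Perm W) :
    Subgroup (Equiv.Perm (W × W × ZMod 2)) :=
  doubleGroupPlus X ⊔ Subgroup.closure {tPerm g}

theorem doubling_even_arcs
    [Finite W] (B : W → W → Prop) (X : Subgroup (Equiv.Perm W)) (s k : ℕ)
    (hdig : IsDigraph B) (hk : 2 ≤ k) (hval : Valency B k)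
    (hAut : PreservesArcs B X) (hvt : VertexTransitive X)
    (hs : 2 ≤ s) (hat : ArcTransitive B X s) :
    ∀ r : ℕ, 1 ≤ r → ∀ p : Fin (2 * r + 1) → W × W × ZMod 2,
      IsArcSeq (doubleArc B) (2 * r) p →
      (p ⟨0, by omega⟩).2.2 = 0 →
      ∃ vv ww : Fin (r + 1) → W,
        IsArcSeq B r vv ∧ IsArcSeq B r ww ∧
        (∀ (i : ℕ) (h : i ≤ r),
          p ⟨2 * i, by omega⟩ = (vv ⟨i, by omega⟩, ww ⟨i, by omega⟩, 0)) ∧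
        (∀ (i : ℕ) (h : i < r),
          p ⟨2 * i + 1, by omega⟩ = (vv ⟨i, by omega⟩, ww ⟨i + 1, by omega⟩, 1)) := by
  intro r hr p hp h0
  have key : ∀ n : ℕ, ∀ _ : n ≤ 2 * r, (p ⟨n, by omega⟩).2.2 = (n : ZMod 2) := by
    intro n
    induction n with
    | zero => intro _; simpa using h0
    | succ m ih =>
      intro hn
      have hm := ih (by omega)
      have harc : doubleArc B (p ⟨m, by omega⟩) (p ⟨m + 1, by omega⟩) := hp ⟨m, by omega⟩
      rcases harc with ⟨h1, h2, -, -⟩ | ⟨h1, h2, -, -⟩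
      · rw [h2]
        rw [hm] at h1
        push_cast
        rw [h1]; ring
      · rw [h2]
        rw [hm] at h1
        push_cast
        rw [h1]; decide
  have main : ∀ i : ℕ, ∀ _hi : i < r,
      (p ⟨2 * i + 1, by omega⟩).1 = (p ⟨2 * i, by omega⟩).1 ∧
      B (p ⟨2 * i, by omega⟩).2.1 (p ⟨2 * i + 1, by omega⟩).2.1 ∧
      B (p ⟨2 * i + 1, by omega⟩).1 (p ⟨2 * i + 2, by omega⟩).1 ∧
      (p ⟨2 * i + 1, by omega⟩).2.1 = (p ⟨2 * i + 2, by omega⟩).2.1 := by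
    intro i hi
    have he : (p ⟨2 * i, by omega⟩).2.2 = 0 := by
      rw [key (2 * i) (by omega)]
      push_cast
      rw [show ((2 : ZMod 2)) = 0 by decide]; ring
    have ho : (p ⟨2 * i + 1, by omega⟩).2.2 = 1 := by
      rw [key (2 * i + 1) (by omega)]
      push_cast
      rw [show ((2 : ZMod 2)) = 0 by decide]; ring
    have harc1 : doubleArc B (p ⟨2 * i, by omega⟩) (p ⟨2 * i + 1, by omega⟩) :=
      hp ⟨2 * i, by omega⟩
    have harc2 : doubleArc B (p ⟨2 * i + 1, by omega⟩) (p ⟨2 * i + 2, by omega⟩) :=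
      hp ⟨2 * i + 1, by omega⟩
    rcases harc1 with ⟨-, -, ha, hb⟩ | ⟨h1, -, -, -⟩
    · rcases harc2 with ⟨h1, -, -, -⟩ | ⟨-, -, hc, hd⟩
      · rw [ho] at h1; exact absurd h1 (by decide)
      · exact ⟨ha, hb, hc, hd⟩
    · rw [he] at h1; exact absurd h1 (by decide)
  refine ⟨fun i => (p ⟨2 * i.val, by have := i.isLt; omega⟩).1,
          fun i => (p ⟨2 * i.val, by have := i.isLt; omega⟩).2.1, ?_, ?_, ?_, ?_⟩
  · intro i
    have hi := i.isLt
    obtain ⟨ha, hb, hc, hd⟩ := main i.val hi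
    show B (p ⟨2 * i.val, by omega⟩).1 (p ⟨2 * (i.val + 1), by omega⟩).1
    have hcast : (⟨2 * (i.val + 1), by omega⟩ : Fin (2 * r + 1)) = ⟨2 * i.val + 2, by omega⟩ := by
      simp [Fin.ext_iff]; ring
    rw [hcast, ← ha]
    exact hc
  · intro i
    have hi := i.isLt
    obtain ⟨ha, hb, hc, hd⟩ := main i.val hi
    show B (p ⟨2 * i.val, by omega⟩).2.1 (p ⟨2 * (i.val + 1), by omega⟩).2.1
    have hcast : (⟨2 * (i.val + 1), by omega⟩ : Fin (2 * r + 1)) = ⟨2 * i.val + 2, by omega⟩ := by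
      simp [Fin.ext_iff]; ring
    rw [hcast, ← hd]
    exact hb
  · intro i h
    have he : (p ⟨2 * i, by omega⟩).2.2 = 0 := by
      rw [key (2 * i) (by omega)]
      push_cast
      rw [show ((2 : ZMod 2)) = 0 by decide]; ring
    exact Prod.ext rfl (Prod.ext rfl he)
  · intro i h
    obtain ⟨ha, hb, hc, hd⟩ := main i h
    have ho : (p ⟨2 * i + 1, by omega⟩).2.2 = 1 := by
      rw [key (2 * i + 1) (by omega)]
      push_cast
      rw [show ((2 : ZMod 2)) = 0 by decide]; ring
    refine Prod.ext ?_ (Prod.ext ?_ ho)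
    · exact ha
    · show (p ⟨2 * i + 1, _⟩).2.1 = (p ⟨2 * (i + 1), by omega⟩).2.1
      have hcast : (⟨2 * (i + 1), by omega⟩ : Fin (2 * r + 1)) = ⟨2 * i + 2, by omega⟩ := by
        simp [Fin.ext_iff]; ring
      rw [hcast, ← hd]

end Doubling
end
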